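/- The number of permutations in S_n(231,312) with exactly k descents equals the binomial coefficient C(n-1, k), for all n ≥ 1 and 0 ≤ k ≤ n-1. -/

import Mathlib

/-- The value of `π` at position `i` (0-based), as a natural number; `0` if out of range. -/
def pv {n : ℕ} (π : Equiv.Perm (Fin n)) (i : ℕ) : ℕ :=
  if h : i < n then (π ⟨i, h⟩ : ℕ) else 0

/-- The set of ascent positions (0-based) of `π`. -/
def ascents {n : ℕ} (π : Equiv.Perm (Fin n)) : Finset ℕ :=
  (Finset.range (n - 1)).filter fun i => pv π i < pv π (i + 1)

/-- The set of descent positions (0-based) of `π`. -/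
def descents {n : ℕ} (π : Equiv.Perm (Fin n)) : Finset ℕ :=
  (Finset.range (n - 1)).filter fun i => pv π (i + 1) < pv π i

def asc {n : ℕ} (π : Equiv.Perm (Fin n)) : ℕ := (ascents π).card

def des {n : ℕ} (π : Equiv.Perm (Fin n)) : ℕ := (descents π).card

/-- The maximum number of non-overlapping ascents of `π`. -/
noncomputable def MNA {n : ℕ} (π : Equiv.Perm (Fin n)) : ℕ :=
  sSup {k | ∃ S ⊆ ascents π, S.card = k ∧ ∀ i ∈ S, ∀ j ∈ S, i < j → i + 1 < j}

/-- The maximum number of non-overlapping descents of `π`. -/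
noncomputable def MND {n : ℕ} (π : Equiv.Perm (Fin n)) : ℕ :=
  sSup {k | ∃ S ⊆ descents π, S.card = k ∧ ∀ i ∈ S, ∀ j ∈ S, i < j → i + 1 < j}

def IsLRMax {n : ℕ} (π : Equiv.Perm (Fin n)) (i : Fin n) : Prop := ∀ j, j < i → π j < π i
def IsRLMax {n : ℕ} (π : Equiv.Perm (Fin n)) (i : Fin n) : Prop := ∀ j, i < j → π j < π i
def IsLRMin {n : ℕ} (π : Equiv.Perm (Fin n)) (i : Fin n) : Prop := ∀ j, j < i → π i < π j
def IsRLMin {n : ℕ} (π : Equiv.Perm (Fin n)) (i : Fin n) : Prop := ∀ j, i < j → π i < π j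

noncomputable def lrmax {n : ℕ} (π : Equiv.Perm (Fin n)) : ℕ := Nat.card {i : Fin n // IsLRMax π i}
noncomputable def rlmax {n : ℕ} (π : Equiv.Perm (Fin n)) : ℕ := Nat.card {i : Fin n // IsRLMax π i}
noncomputable def lrmin {n : ℕ} (π : Equiv.Perm (Fin n)) : ℕ := Nat.card {i : Fin n // IsLRMin π i}
noncomputable def rlmin {n : ℕ} (π : Equiv.Perm (Fin n)) : ℕ := Nat.card {i : Fin n // IsRLMin π i}

def Avoids123 {n : ℕ} (π : Equiv.Perm (Fin n)) : Prop :=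
  ¬ ∃ i j k : Fin n, i < j ∧ j < k ∧ π i < π j ∧ π j < π k
def Avoids132 {n : ℕ} (π : Equiv.Perm (Fin n)) : Prop :=
  ¬ ∃ i j k : Fin n, i < j ∧ j < k ∧ π i < π k ∧ π k < π j
def Avoids213 {n : ℕ} (π : Equiv.Perm (Fin n)) : Prop :=
  ¬ ∃ i j k : Fin n, i < j ∧ j < k ∧ π j < π i ∧ π i < π k
def Avoids231 {n : ℕ} (π : Equiv.Perm (Fin n)) : Prop :=
  ¬ ∃ i j k : Fin n, i < j ∧ j < k ∧ π k < π i ∧ π i < π j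
def Avoids312 {n : ℕ} (π : Equiv.Perm (Fin n)) : Prop :=
  ¬ ∃ i j k : Fin n, i < j ∧ j < k ∧ π j < π k ∧ π k < π i
def Avoids321 {n : ℕ} (π : Equiv.Perm (Fin n)) : Prop :=
  ¬ ∃ i j k : Fin n, i < j ∧ j < k ∧ π k < π j ∧ π j < π i

/-!
A permutation avoids 231 and 312 exactly when its inversions are convex: if `i < j < k` and
`π k < π i`, then `π k < π j < π i`. Hence `i < j` is an inversion iff every position in `[i, j)`
is a descent, so the descent set determines the inversion set and thus the permutation. Conversely,
every `S ⊆ {0, …, n - 2}` is realised by the layered permutation that reverses each maximal block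
of consecutive positions joined by elements of `S`. So the descent set is a bijection onto the
subsets of `{0, …, n - 2}`, and `k` descents correspond to `k`-subsets.
-/

open Finset

theorem Equiv.Perm.ext_of_inversions {n : ℕ} {π σ : Equiv.Perm (Fin n)}
    (h : ∀ i j, i < j → (π j < π i ↔ σ j < σ i)) : π = σ := by
  have hlt : ∀ i j, π i < π j ↔ σ i < σ j := by
    intro i j
    rcases lt_trichotomy i j with hij | rfl | hij
    · rw [← not_iff_not, not_lt, not_lt, le_iff_lt_or_eq, le_iff_lt_or_eq, h i j hij,
        π.injective.eq_iff, σ.injective.eq_iff]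
    · simp
    · exact h j i hij
  have hmono : StrictMono (σ.symm.trans π) := fun x y hxy => by
    simpa [hlt] using hxy
  have hid : ⇑(σ.symm.trans π) = id := (hmono.range_inj strictMono_id).1 (by simp)
  exact Equiv.ext fun x => by simpa using congrFun hid (σ x)

section Runs

variable (S : Finset ℕ) {i j : ℕ}

theorem exists_ge_notMem (i : ℕ) : ∃ b, i ≤ b ∧ b ∉ S := by
  obtain ⟨m, hm⟩ := S.exists_nat_subset_range
  exact ⟨i + m, by omega, fun h => by simpa using hm h⟩

def runEnd (i : ℕ) : ℕ := Nat.find (exists_ge_notMem S i)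

theorem le_runEnd : i ≤ runEnd S i := (Nat.find_spec (exists_ge_notMem S i)).1

theorem runEnd_notMem : runEnd S i ∉ S := (Nat.find_spec (exists_ge_notMem S i)).2

theorem runEnd_le {b : ℕ} (hib : i ≤ b) (hb : b ∉ S) : runEnd S i ≤ b :=
  Nat.find_min' _ ⟨hib, hb⟩

theorem Ico_subset_iff_le_runEnd : Ico i j ⊆ S ↔ j ≤ runEnd S i := by
  refine ⟨fun h => ?_, fun h m hm => ?_⟩
  · by_contra! hlt
    exact runEnd_notMem S (h (mem_Ico.2 ⟨le_runEnd S, hlt⟩))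
  · rw [mem_Ico] at hm
    by_contra hmS
    exact absurd (runEnd_le S hm.1 hmS) (by omega)

def runStart (i : ℕ) : ℕ := Nat.find (⟨i, le_rfl, by simp⟩ : ∃ a, a ≤ i ∧ Ico a i ⊆ S)

theorem runStart_le : runStart S i ≤ i := (Nat.find_spec (p := fun a => a ≤ i ∧ Ico a i ⊆ S) _).1

theorem Ico_runStart_subset : Ico (runStart S i) i ⊆ S :=
  (Nat.find_spec (p := fun a => a ≤ i ∧ Ico a i ⊆ S) _).2

theorem runStart_le_of_Ico_subset {a : ℕ} (hai : a ≤ i) (h : Ico a i ⊆ S) : runStart S i ≤ a :=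
  Nat.find_min' _ ⟨hai, h⟩

/-- `i ↦ a + b - i` reverses the block `[a, b] = [runStart S i, runEnd S i]`, whose positions
`a, …, b - 1` all lie in `S`. -/
def layered (i : ℕ) : ℕ := runStart S i + runEnd S i - i

theorem layered_le_runEnd : layered S i ≤ runEnd S i := by
  have := runStart_le S (i := i)
  unfold layered
  omega

theorem runEnd_lt_layered (h : runEnd S i < j) : runEnd S i < layered S j := by
  have hstart : runEnd S i < runStart S j := by
    by_contra! hle
    exact runEnd_notMem S (Ico_runStart_subset S (mem_Ico.2 ⟨hle, h⟩))
  have := le_runEnd S (i := j)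
  unfold layered
  omega

theorem layered_lt_layered (hij : i < j) (hj : j ≤ runEnd S i) : layered S j < layered S i := by
  have hstart : runStart S j ≤ runStart S i := by
    refine runStart_le_of_Ico_subset S ((runStart_le S).trans hij.le) fun m hm => ?_
    rw [mem_Ico] at hm
    rcases lt_or_ge m i with hmi | hmi
    · exact Ico_runStart_subset S (mem_Ico.2 ⟨hm.1, hmi⟩)
    · exact (Ico_subset_iff_le_runEnd S).2 hj (mem_Ico.2 ⟨hmi, hm.2⟩)
  have hend : runEnd S j ≤ runEnd S i := runEnd_le S hj (runEnd_notMem S)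
  have := runStart_le S (i := i)
  have := le_runEnd S (i := j)
  unfold layered
  omega

theorem layered_lt_layered_iff (hij : i < j) : layered S j < layered S i ↔ Ico i j ⊆ S := by
  rw [Ico_subset_iff_le_runEnd S]
  refine ⟨fun h => ?_, layered_lt_layered S hij⟩
  by_contra! hj
  have := layered_le_runEnd S (i := i)
  have := runEnd_lt_layered S hj
  omega

theorem layered_injective : Function.Injective (layered S) := by
  refine Function.Injective.of_lt_imp_ne fun i j hij => ?_
  by_cases hj : j ≤ runEnd S i
  · exact (layered_lt_layered S hij hj).ne'
  · exact ((layered_le_runEnd S).trans_lt (runEnd_lt_layered S (not_le.1 hj))).ne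

theorem layered_lt {n : ℕ} (hS : S ⊆ range (n - 1)) (hi : i < n) : layered S i < n := by
  have := runEnd_le S (i := i) (b := n - 1) (by omega) (fun h => by simpa using hS h)
  have := layered_le_runEnd S (i := i)
  omega

end Runs

section Layered

variable {n : ℕ}

theorem pv_of_lt (π : Equiv.Perm (Fin n)) {i : ℕ} (hi : i < n) : pv π i = π ⟨i, hi⟩ :=
  dif_pos hi

theorem mem_descents_iff {π : Equiv.Perm (Fin n)} {m : ℕ} (hm : m + 1 < n) :
    m ∈ descents π ↔ π ⟨m + 1, hm⟩ < π ⟨m, by omega⟩ := by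
  rw [descents, mem_filter, mem_range, pv_of_lt π hm, pv_of_lt π (show m < n by omega),
    Fin.lt_def]
  exact and_iff_right (by omega)

def IsLayered (π : Equiv.Perm (Fin n)) (S : Finset ℕ) : Prop :=
  ∀ i j : Fin n, i < j → (π j < π i ↔ Ico (i : ℕ) j ⊆ S)

theorem exists_isLayered {S : Finset ℕ} (hS : S ⊆ range (n - 1)) :
    ∃ π : Equiv.Perm (Fin n), IsLayered π S := by
  let f : Fin n → Fin n := fun i => ⟨layered S i, layered_lt S hS i.2⟩
  have hf : Function.Injective f := fun i j h =>
    Fin.ext (layered_injective S (congrArg Fin.val h))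
  exact ⟨Equiv.ofBijective f (Finite.injective_iff_bijective.1 hf),
    fun i j hij => layered_lt_layered_iff S hij⟩

namespace IsLayered

variable {π σ : Equiv.Perm (Fin n)} {S : Finset ℕ}

theorem eq (hπ : IsLayered π S) (hσ : IsLayered σ S) : π = σ :=
  Equiv.Perm.ext_of_inversions fun i j hij => (hπ i j hij).trans (hσ i j hij).symm

theorem avoids231 (h : IsLayered π S) : Avoids231 π := by
  rintro ⟨i, j, k, hij, hjk, hki, hij'⟩
  have hS := (h i k (hij.trans hjk)).1 hki
  exact hij'.not_gt <|
    (h i j hij).2 ((Ico_subset_Ico_right (show (j : ℕ) ≤ k from hjk.le)).trans hS)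

theorem avoids312 (h : IsLayered π S) : Avoids312 π := by
  rintro ⟨i, j, k, hij, hjk, hjk', hki⟩
  have hS := (h i k (hij.trans hjk)).1 hki
  exact hjk'.not_gt <|
    (h j k hjk).2 ((Ico_subset_Ico_left (show (i : ℕ) ≤ j from hij.le)).trans hS)

theorem descents_eq (h : IsLayered π S) (hS : S ⊆ range (n - 1)) : descents π = S := by
  ext m
  by_cases hm : m + 1 < n
  · rw [mem_descents_iff hm, h ⟨m, by omega⟩ ⟨m + 1, hm⟩ (Fin.mk_lt_mk.2 m.lt_succ_self),
      Nat.Ico_succ_singleton, singleton_subset_iff]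
  · refine iff_of_false (fun hmd => ?_) (fun hmS => ?_)
    · have := mem_range.1 (mem_filter.1 hmd).1
      omega
    · have := mem_range.1 (hS hmS)
      omega

end IsLayered

section Avoidance

variable {π : Equiv.Perm (Fin n)}

theorem lt_and_lt_of_avoids231_of_avoids312 (h231 : Avoids231 π) (h312 : Avoids312 π)
    {i j k : Fin n} (hij : i < j) (hjk : j < k) (hki : π k < π i) : π k < π j ∧ π j < π i := by
  have hji : π j < π i := by
    by_contra! hle
    exact h231 ⟨i, j, k, hij, hjk, hki, lt_of_le_of_ne hle (π.injective.ne hij.ne)⟩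
  refine ⟨?_, hji⟩
  by_contra! hle
  exact h312 ⟨i, j, k, hij, hjk, lt_of_le_of_ne hle (π.injective.ne hjk.ne), hki⟩

theorem isLayered_descents (h231 : Avoids231 π) (h312 : Avoids312 π) :
    IsLayered π (descents π) := by
  intro i j hij
  constructor
  · intro hji m hm
    rw [mem_Ico] at hm
    have hm1 : m + 1 < n := by omega
    rw [mem_descents_iff hm1]
    have hjm : π j < π ⟨m, by omega⟩ := by
      rcases hm.1.eq_or_lt with him | him
      · simpa [← him] using hji
      · exact (lt_and_lt_of_avoids231_of_avoids312 h231 h312 (Fin.mk_lt_mk.2 him)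
          (Fin.mk_lt_mk.2 hm.2) hji).1
    rcases (show m + 1 ≤ j from hm.2).eq_or_lt with hmj | hmj
    · simpa [hmj] using hjm
    · exact (lt_and_lt_of_avoids231_of_avoids312 h231 h312 (Fin.mk_lt_mk.2 m.lt_succ_self)
        hmj hjm).2
  · intro hS
    have hanti : StrictAntiOn (pv π) (Set.Icc (i : ℕ) j) := by
      refine strictAntiOn_of_succ_lt Set.ordConnected_Icc fun a _ ha hsa => ?_
      rw [Order.succ_eq_add_one] at hsa ⊢
      exact (mem_filter.1 (hS (mem_Ico.2 ⟨ha.1, hsa.2⟩))).2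
    have := hanti ⟨le_rfl, hij.le⟩ ⟨hij.le, le_rfl⟩ hij
    rwa [pv_of_lt π i.2, pv_of_lt π j.2] at this

end Avoidance

end Layered

theorem card_avoid_231_312_with_descents_general (n k : ℕ) :
    Nat.card {π : Equiv.Perm (Fin n) // (Avoids231 π ∧ Avoids312 π) ∧ des π = k} =
      Nat.choose (n - 1) k := by
  let Φ : {π : Equiv.Perm (Fin n) // (Avoids231 π ∧ Avoids312 π) ∧ des π = k} →
      powersetCard k (range (n - 1)) :=
    fun π => ⟨descents π.1, mem_powersetCard.2 ⟨filter_subset _ _, π.2.2⟩⟩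
  have hΦ : Function.Bijective Φ := by
    refine ⟨fun π σ h => Subtype.ext ?_, fun S => ?_⟩
    · have hd : descents π.1 = descents σ.1 := congrArg Subtype.val h
      exact (isLayered_descents π.2.1.1 π.2.1.2).eq (hd ▸ isLayered_descents σ.2.1.1 σ.2.1.2)
    · obtain ⟨hS, hcard⟩ := mem_powersetCard.1 S.2
      obtain ⟨π, hπ⟩ := exists_isLayered hS
      have hd := hπ.descents_eq hS
      exact ⟨⟨π, ⟨hπ.avoids231, hπ.avoids312⟩, by rw [des, hd, hcard]⟩, Subtype.ext hd⟩
  rw [Nat.card_eq_of_bijective Φ hΦ, Nat.card_eq_fintype_card, Fintype.card_coe,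
    card_powersetCard, card_range]

theorem card_avoid_231_312_with_descents (n k : ℕ) (hn : 1 ≤ n) (hk : k ≤ n - 1) :
    Nat.card {π : Equiv.Perm (Fin n) // (Avoids231 π ∧ Avoids312 π) ∧ des π = k} =
      Nat.choose (n - 1) k :=
  card_avoid_231_312_with_descents_general n k
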